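/- arXiv:2110.10093 — 3 statements merged into one kernel-verified Lean document; each statement's English description precedes it below -/
import Mathlib

section
/- For a closed convex cone C in R^d and any x in R^d, the norm of the projection of x onto C equals the supremum over all v in C with ‖v‖ ≤ 1 of the inner product ⟨v, x⟩. -/
open scoped BigOperators

/-- Euclidean norm on `Fin d → ℝ`. -/
noncomputable def euclNorm {d : ℕ} (v : Fin d → ℝ) : ℝ := Real.sqrt (∑ j, v j ^ 2)

/-- Euclidean inner product on `Fin d → ℝ`. -/
noncomputable def dot {d : ℕ} (u v : Fin d → ℝ) : ℝ := ∑ j, u j * v j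

lemma euclNorm_nonneg {d : ℕ} (v : Fin d → ℝ) : 0 ≤ euclNorm v := Real.sqrt_nonneg _

lemma dot_self_nonneg {d : ℕ} (v : Fin d → ℝ) : 0 ≤ dot v v :=
  Finset.sum_nonneg fun j _ => mul_self_nonneg _

lemma sq_euclNorm {d : ℕ} (v : Fin d → ℝ) : euclNorm v ^ 2 = dot v v := by
  rw [euclNorm, Real.sq_sqrt (by positivity)]
  simp [dot, sq]

lemma dot_comm {d : ℕ} (u v : Fin d → ℝ) : dot u v = dot v u := by
  simp [dot, mul_comm]

lemma dot_sub_smul {d : ℕ} (u w : Fin d → ℝ) (t : ℝ) :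
    dot (u - t • w) (u - t • w) = dot u u - 2*t*dot u w + t^2 * dot w w := by
  simp only [dot, Pi.sub_apply, Pi.smul_apply, smul_eq_mul, Finset.mul_sum,
    ← Finset.sum_sub_distrib, ← Finset.sum_add_distrib]
  apply Finset.sum_congr rfl
  intros; ring

lemma dot_sub_left {d : ℕ} (u w v : Fin d → ℝ) : dot (u - w) v = dot u v - dot w v := by
  simp [dot, sub_mul, Finset.sum_sub_distrib]

lemma dot_smul_left {d : ℕ} (a : ℝ) (u v : Fin d → ℝ) : dot (a • u) v = a * dot u v := by
  simp [dot, Finset.mul_sum, mul_assoc]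

lemma euclNorm_smul {d : ℕ} (a : ℝ) (v : Fin d → ℝ) : euclNorm (a • v) = |a| * euclNorm v := by
  simp [euclNorm, mul_pow, ← Finset.mul_sum, Real.sqrt_mul (sq_nonneg a), Real.sqrt_sq_eq_abs]

lemma euclNorm_pos {d : ℕ} {p : Fin d → ℝ} (hp : p ≠ 0) : 0 < euclNorm p := by
  rcases (euclNorm_nonneg p).lt_or_eq with h | h
  · exact h
  exfalso; apply hp; funext j
  have hs : ∑ j, p j ^ 2 = 0 :=
    le_antisymm (Real.sqrt_eq_zero'.mp h.symm) (by positivity)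
  have := (Finset.sum_eq_zero_iff_of_nonneg (fun i _ => sq_nonneg (p i))).mp hs j (Finset.mem_univ j)
  exact (pow_eq_zero_iff two_ne_zero).mp this

lemma dot_le_norm_mul_norm {d : ℕ} (u v : Fin d → ℝ) : dot u v ≤ euclNorm u * euclNorm v := by
  have h := Finset.sum_mul_sq_le_sq_mul_sq Finset.univ u v
  calc dot u v ≤ |dot u v| := le_abs_self _
    _ = Real.sqrt ((dot u v)^2) := (Real.sqrt_sq_eq_abs _).symm
    _ ≤ Real.sqrt ((∑ j, u j ^2) * ∑ j, v j ^2) := Real.sqrt_le_sqrt h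
    _ = euclNorm u * euclNorm v := Real.sqrt_mul (by positivity) _

/-- For a nonempty closed convex cone `C`, the norm of the Euclidean projection of `x`
onto `C` equals the supremum of `⟨v, x⟩` over `v ∈ C` with `‖v‖ ≤ 1`. -/
theorem norm_proj_cone_eq_sup {d : ℕ} (C : Set (Fin d → ℝ)) (hCc : IsClosed C)
    (hCconv : Convex ℝ C) (hcone : ∀ a : ℝ, 0 ≤ a → ∀ v ∈ C, a • v ∈ C)
    (hne : C.Nonempty) (x p : Fin d → ℝ) (hpC : p ∈ C)
    (hnear : ∀ z ∈ C, euclNorm (x - p) ≤ euclNorm (x - z)) :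
    euclNorm p = sSup {r : ℝ | ∃ v ∈ C, euclNorm v ≤ 1 ∧ r = dot v x} := by
  have h0C : (0 : Fin d → ℝ) ∈ C := by
    obtain ⟨v, hv⟩ := hne
    simpa using hcone 0 le_rfl v hv
  have hnear2 : ∀ z ∈ C, dot (x - p) (x - p) ≤ dot (x - z) (x - z) := by
    intro z hz
    have h := hnear z hz
    calc dot (x-p) (x-p) = euclNorm (x-p)^2 := (sq_euclNorm _).symm
      _ ≤ euclNorm (x-z)^2 := by nlinarith [euclNorm_nonneg (x-p)]
      _ = dot (x-z) (x-z) := sq_euclNorm _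
  have hvar : ∀ z ∈ C, dot (x - p) (z - p) ≤ 0 := by
    intro z hz
    by_contra hpos
    push_neg at hpos
    set D := dot (x - p) (z - p) with hD
    set Q := dot (z - p) (z - p) with hQ
    have hQ0 : 0 ≤ Q := dot_self_nonneg _
    have key : ∀ t : ℝ, 0 < t → t ≤ 1 → 2 * D ≤ t * Q := by
      intro t ht0 ht1
      have hmem : (1 - t) • p + t • z ∈ C :=
        hCconv hpC hz (by linarith) (le_of_lt ht0) (by ring)
      have h2 := hnear2 _ hmem
      have hexp : x - ((1 - t) • p + t • z) = (x - p) - t • (z - p) := by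
        funext j
        simp only [Pi.sub_apply, Pi.add_apply, Pi.smul_apply, smul_eq_mul]
        ring
      rw [hexp, dot_sub_smul] at h2
      nlinarith
    rcases le_or_gt Q 0 with h | h
    · have := key 1 one_pos le_rfl; linarith
    · have hmin : 0 < min 1 (D/Q) := lt_min one_pos (div_pos hpos h)
      have hk := key _ hmin (min_le_left _ _)
      have h2 : min 1 (D/Q) * Q ≤ D := by
        have h3 := mul_le_mul_of_nonneg_right (min_le_right 1 (D/Q)) h.le
        rwa [div_mul_cancel₀ D h.ne'] at h3
      linarith
  have horth : dot p (x - p) = 0 := by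
    have h1 := hvar 0 h0C
    have h2 := hvar ((2:ℝ) • p) (hcone 2 (by norm_num) p hpC)
    have e1 : dot (x - p) ((0:Fin d → ℝ) - p) = -dot p (x - p) := by
      rw [dot_comm, dot_sub_left]; simp [dot]
    have e2 : dot (x - p) ((2:ℝ) • p - p) = dot p (x - p) := by
      rw [dot_comm, dot_sub_left, dot_smul_left]; ring
    rw [e1] at h1; rw [e2] at h2
    linarith
  have hdotpx : dot p x = dot p p := by
    have := horth
    rw [dot_comm p (x - p), dot_sub_left] at this
    rw [dot_comm p x]
    rw [dot_comm p p] at this ⊢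
    linarith
  symm
  apply IsGreatest.csSup_eq
  constructor
  · -- membership
    by_cases hp : p = 0
    · refine ⟨0, h0C, ?_, ?_⟩
      · simp [euclNorm]
      · subst hp; simp [euclNorm, dot]
    · have hpn : 0 < euclNorm p := euclNorm_pos hp
      refine ⟨(euclNorm p)⁻¹ • p, hcone _ (inv_nonneg.mpr hpn.le) p hpC, ?_, ?_⟩
      · rw [euclNorm_smul, abs_of_nonneg (inv_nonneg.mpr hpn.le),
          inv_mul_cancel₀ hpn.ne']
      · rw [dot_smul_left, hdotpx, ← sq_euclNorm]
        field_simp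
  · rintro r ⟨v, hvC, hv1, rfl⟩
    have hv0 : dot (x - p) v ≤ 0 := by
      have h := hvar v hvC
      have e : dot (x - p) (v - p) = dot (x - p) v - dot p (x - p) := by
        rw [dot_comm (x - p) (v - p), dot_sub_left, dot_comm v (x - p)]
      rw [e, horth] at h
      linarith
    have e2 : dot (x - p) v = dot x v - dot p v := dot_sub_left _ _ _
    have hcs : dot v p ≤ euclNorm p := by
      calc dot v p ≤ euclNorm v * euclNorm p := dot_le_norm_mul_norm _ _
        _ ≤ 1 * euclNorm p := mul_le_mul_of_nonneg_right hv1 (euclNorm_nonneg p)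
        _ = euclNorm p := one_mul _
    have hc : dot v p = dot p v := dot_comm _ _
    have hc2 : dot v x = dot x v := dot_comm _ _
    linarith
end

section
/- Let D ⊆ R^d be a nonempty closed convex set containing the origin, and let C be the cone generated by D (the closure of {a·v : a ≥ 0, v ∈ D}). Then for every x ∈ R^d, ‖P_D(x)‖₂ ≤ ‖P_C(x)‖₂. -/
open scoped BigOperators

open scoped RealInnerProductSpace

/-!
If `p_D` and `p_C` are the nearest points of `x` in `D` and in the cone `C ⊇ D`, the variational
inequality for `D` tested at `0 ∈ D` gives `‖p_D‖² ≤ ⟪x, p_D⟫`. Since `C` is a convex cone,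
`p_C + p_D ∈ C`, and the variational inequality for `C` tested there gives `⟪x - p_C, p_D⟫ ≤ 0`.
Hence `‖p_D‖² ≤ ⟪p_C, p_D⟫ ≤ ‖p_C‖ ‖p_D‖`.
-/

section NearestPoint

variable {F : Type*} [NormedAddCommGroup F] [InnerProductSpace ℝ F]

theorem IsMinOn.real_inner_sub_le_zero {K : Set F} (hK : Convex ℝ K) {x p z : F} (hp : p ∈ K)
    (hmin : IsMinOn (fun w => ‖x - w‖) K p) (hz : z ∈ K) : ⟪x - p, z - p⟫ ≤ 0 :=
  (norm_eq_iInf_iff_real_inner_le_zero hK hp).1 (hmin.iInf_eq hp).symm z hz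

theorem IsMinOn.norm_sq_le_real_inner {K : Set F} (hK : Convex ℝ K) (h0 : 0 ∈ K) {x p : F}
    (hp : p ∈ K) (hmin : IsMinOn (fun w => ‖x - w‖) K p) : ‖p‖ ^ 2 ≤ ⟪x, p⟫ := by
  have h := hmin.real_inner_sub_le_zero hK hp h0
  rw [zero_sub, inner_neg_right, inner_sub_left, real_inner_self_eq_norm_sq] at h
  linarith

theorem ConvexCone.real_inner_sub_le_zero_of_isMinOn (K : ConvexCone ℝ F) {x p z : F}
    (hp : p ∈ K) (hmin : IsMinOn (fun w => ‖x - w‖) K p) (hz : z ∈ K) : ⟪x - p, z⟫ ≤ 0 := by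
  simpa using hmin.real_inner_sub_le_zero K.convex hp (K.add_mem hz hp)

theorem norm_le_norm_of_isMinOn_of_subset_convexCone {D : Set F} (hD : Convex ℝ D) (h0 : 0 ∈ D)
    (K : ConvexCone ℝ F) (hDK : D ⊆ K) {x pD pK : F}
    (hpD : pD ∈ D) (hnD : IsMinOn (fun w => ‖x - w‖) D pD)
    (hpK : pK ∈ K) (hnK : IsMinOn (fun w => ‖x - w‖) K pK) : ‖pD‖ ≤ ‖pK‖ := by
  have hpolar : ⟪x - pK, pD⟫ ≤ 0 := K.real_inner_sub_le_zero_of_isMinOn hpK hnK (hDK hpD)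
  have hsq : ‖pD‖ ^ 2 ≤ ‖pK‖ * ‖pD‖ :=
    calc ‖pD‖ ^ 2 ≤ ⟪x, pD⟫ := hnD.norm_sq_le_real_inner hD h0 hpD
      _ = ⟪x - pK, pD⟫ + ⟪pK, pD⟫ := by rw [inner_sub_left]; ring
      _ ≤ ‖pK‖ * ‖pD‖ := by linarith [real_inner_le_norm pK pD]
  nlinarith [norm_nonneg pD, norm_nonneg pK]

end NearestPoint

theorem ConvexCone.coe_hull_of_convex_of_zero_mem {𝕜 E : Type*} [Field 𝕜] [LinearOrder 𝕜]
    [IsStrictOrderedRing 𝕜] [AddCommGroup E] [Module 𝕜 E] {s : Set E} (hs : Convex 𝕜 s)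
    (h0 : 0 ∈ s) : (hull 𝕜 s : Set E) = {v | ∃ a : 𝕜, 0 ≤ a ∧ ∃ u ∈ s, v = a • u} := by
  ext v
  simp only [SetLike.mem_coe, mem_hull_of_convex hs, Set.mem_smul_set, Set.mem_ofPred_eq]
  constructor
  · rintro ⟨c, hc, u, hu, rfl⟩
    exact ⟨c, hc.le, u, hu, rfl⟩
  · rintro ⟨a, ha, u, hu, rfl⟩
    rcases ha.eq_or_lt with rfl | ha
    · exact ⟨1, one_pos, 0, h0, by simp⟩
    · exact ⟨a, ha, u, hu, rfl⟩

theorem euclNorm_eq_norm {d : ℕ} (v : Fin d → ℝ) : euclNorm v = ‖WithLp.toLp 2 v‖ := by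
  simp [euclNorm, EuclideanSpace.norm_eq]

theorem isMinOn_norm_sub_toLp {d : ℕ} {S : Set (Fin d → ℝ)} {x p : Fin d → ℝ}
    (h : ∀ z ∈ S, euclNorm (x - p) ≤ euclNorm (x - z)) :
    IsMinOn (fun w => ‖WithLp.toLp 2 x - w‖) (WithLp.ofLp ⁻¹' S) (WithLp.toLp 2 p) := by
  intro z hz
  simpa [euclNorm_eq_norm] using h z.ofLp hz

theorem norm_proj_le_norm_proj_cone_general {d : ℕ} (D : Set (Fin d → ℝ))
    (hDconv : Convex ℝ D) (h0 : (0 : Fin d → ℝ) ∈ D)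
    (C : Set (Fin d → ℝ))
    (hC : C = closure {v | ∃ a : ℝ, 0 ≤ a ∧ ∃ u ∈ D, v = a • u})
    (x pD pC : Fin d → ℝ)
    (hpD : pD ∈ D) (hnD : ∀ z ∈ D, euclNorm (x - pD) ≤ euclNorm (x - z))
    (hpC : pC ∈ C) (hnC : ∀ z ∈ C, euclNorm (x - pC) ≤ euclNorm (x - z)) :
    euclNorm pD ≤ euclNorm pC := by
  rw [← ConvexCone.coe_hull_of_convex_of_zero_mem hDconv h0, ← ConvexCone.coe_closure] at hC
  subst hC
  let K := (ConvexCone.hull ℝ D).closure.comap (WithLp.linearEquiv 2 ℝ (Fin d → ℝ)).toLinearMap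
  rw [euclNorm_eq_norm, euclNorm_eq_norm]
  exact norm_le_norm_of_isMinOn_of_subset_convexCone
    (hDconv.linear_preimage (WithLp.linearEquiv 2 ℝ (Fin d → ℝ)).toLinearMap) h0 K
    (fun _ hz => subset_closure (ConvexCone.subset_hull hz)) hpD (isMinOn_norm_sub_toLp hnD)
    hpC (isMinOn_norm_sub_toLp hnC)

/-- For a nonempty closed convex set `D` containing the origin and `C` the closed cone
generated by `D`, the projection onto `D` has norm at most that of the projection onto `C`. -/
theorem norm_proj_le_norm_proj_cone {d : ℕ} (D : Set (Fin d → ℝ)) (hDc : IsClosed D)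
    (hDconv : Convex ℝ D) (h0 : (0 : Fin d → ℝ) ∈ D)
    (C : Set (Fin d → ℝ))
    (hC : C = closure {v | ∃ a : ℝ, 0 ≤ a ∧ ∃ u ∈ D, v = a • u})
    (x pD pC : Fin d → ℝ)
    (hpD : pD ∈ D) (hnD : ∀ z ∈ D, euclNorm (x - pD) ≤ euclNorm (x - z))
    (hpC : pC ∈ C) (hnC : ∀ z ∈ C, euclNorm (x - pC) ≤ euclNorm (x - z)) :
    euclNorm pD ≤ euclNorm pC :=
  norm_proj_le_norm_proj_cone_general D hDconv h0 C hC x pD pC hpD hnD hpC hnC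
end

section
/- Let M ⊆ R^d be a nonempty closed set containing x†, and let C be the cone generated by M − x† (i.e., C = {a(x − x†) : a ≥ 0, x ∈ M}). Suppose P is an ε-approximate projection onto M, meaning P(u) = P_M(u) + e(u) with ‖e(u)‖₂ ≤ ε for all u. Then for any u ∈ R^d: ‖P(u) − x†‖₂ ≤ 2 · sup_{v ∈ C, ‖v‖₂ ≤ 1} ⟨v, u − x†⟩ + ε. -/
open scoped BigOperators

/-!
Write `w = u - x†` and `p = P_M(u) - x†`. Since `x† ∈ M`, the projection is at least as close
to `u` as `x†`, i.e. `‖w - p‖ ≤ ‖w‖`; expanding the square gives `‖p‖² ≤ 2⟪p, w⟫`. As `p` lies in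
the cone `C`, the unit vector `p / ‖p‖` is admissible in the supremum, so
`‖p‖ ≤ 2⟪p / ‖p‖, w⟫ ≤ 2 sup_{v ∈ C, ‖v‖ ≤ 1} ⟨v, w⟩`, and the triangle inequality adds `ε`.
-/

open scoped RealInnerProductSpace

section InnerProductSpace

variable {E : Type*} [NormedAddCommGroup E] [InnerProductSpace ℝ E]

/-- For a closed convex cone `K` this is `‖P_K w‖`. -/
noncomputable def supportOnUnitBall (K : Set E) (w : E) : ℝ :=
  sSup {r | ∃ v ∈ K, ‖v‖ ≤ 1 ∧ r = ⟪v, w⟫}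

theorem inner_le_supportOnUnitBall {K : Set E} {v : E} (hv : v ∈ K) (hv1 : ‖v‖ ≤ 1) (w : E) :
    ⟪v, w⟫ ≤ supportOnUnitBall K w := by
  refine le_csSup ⟨‖w‖, ?_⟩ ⟨v, hv, hv1, rfl⟩
  rintro _ ⟨v', -, hv'1, rfl⟩
  calc ⟪v', w⟫ ≤ ‖v'‖ * ‖w‖ := real_inner_le_norm _ _
    _ ≤ ‖w‖ := mul_le_of_le_one_left (norm_nonneg _) hv'1

theorem sq_norm_le_two_mul_inner_of_norm_sub_le {p w : E} (h : ‖w - p‖ ≤ ‖w‖) :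
    ‖p‖ ^ 2 ≤ 2 * ⟪p, w⟫ := by
  have hsq := pow_le_pow_left₀ (norm_nonneg _) h 2
  rw [norm_sub_sq_real, real_inner_comm] at hsq
  linarith

theorem norm_le_two_mul_inner_normalize_of_norm_sub_le {p w : E} (h : ‖w - p‖ ≤ ‖w‖) :
    ‖p‖ ≤ 2 * ⟪‖p‖⁻¹ • p, w⟫ := by
  have hnorm : ‖p‖ = ‖p‖⁻¹ * ‖p‖ ^ 2 := by
    rcases eq_or_ne ‖p‖ 0 with h0 | h0
    · simp [h0]
    · field_simp
  calc ‖p‖ = ‖p‖⁻¹ * ‖p‖ ^ 2 := hnorm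
    _ ≤ ‖p‖⁻¹ * (2 * ⟪p, w⟫) := by
      gcongr
      exact sq_norm_le_two_mul_inner_of_norm_sub_le h
    _ = 2 * ⟪‖p‖⁻¹ • p, w⟫ := by rw [real_inner_smul_left]; ring

theorem norm_le_two_mul_supportOnUnitBall {K : Set E}
    (hK : ∀ a : ℝ, 0 ≤ a → ∀ v ∈ K, a • v ∈ K) {p w : E} (hp : p ∈ K)
    (h : ‖w - p‖ ≤ ‖w‖) : ‖p‖ ≤ 2 * supportOnUnitBall K w := by
  have hunit : ‖‖p‖⁻¹ • p‖ ≤ 1 := by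
    rw [norm_smul, norm_inv, norm_norm]
    exact inv_mul_le_one_of_le₀ le_rfl (norm_nonneg _)
  calc ‖p‖ ≤ 2 * ⟪‖p‖⁻¹ • p, w⟫ := norm_le_two_mul_inner_normalize_of_norm_sub_le h
    _ ≤ 2 * supportOnUnitBall K w := by
      gcongr
      exact inner_le_supportOnUnitBall (hK _ (by positivity) p hp) hunit w

end InnerProductSpace

section Coordinates

variable {d : ℕ}

theorem euclNorm_eq_norm_toLp (v : Fin d → ℝ) : euclNorm v = ‖WithLp.toLp 2 v‖ := by
  simp [EuclideanSpace.norm_eq, euclNorm]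

theorem dot_eq_inner_toLp (u v : Fin d → ℝ) :
    dot u v = ⟪WithLp.toLp 2 u, WithLp.toLp 2 v⟫ := by
  simp [dot, PiLp.inner_apply, mul_comm]

theorem sSup_dot_eq_supportOnUnitBall (C : Set (Fin d → ℝ)) (w : Fin d → ℝ) :
    sSup {r : ℝ | ∃ v ∈ C, euclNorm v ≤ 1 ∧ r = dot v w}
      = supportOnUnitBall (WithLp.toLp 2 '' C) (WithLp.toLp 2 w) := by
  simp only [supportOnUnitBall, Set.exists_mem_image, euclNorm_eq_norm_toLp, dot_eq_inner_toLp]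

end Coordinates

theorem approx_proj_error_bound_general {d : ℕ} (M : Set (Fin d → ℝ))
    (xdag : Fin d → ℝ) (hxdag : xdag ∈ M)
    (C : Set (Fin d → ℝ))
    (hC : C = {v | ∃ a : ℝ, 0 ≤ a ∧ ∃ z ∈ M, v = a • (z - xdag)})
    (PM P : (Fin d → ℝ) → (Fin d → ℝ))
    (hPM : ∀ u, PM u ∈ M ∧ ∀ z ∈ M, euclNorm (u - PM u) ≤ euclNorm (u - z))
    (ε : ℝ) (hP : ∀ u, euclNorm (P u - PM u) ≤ ε) :
    ∀ u : Fin d → ℝ,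
      euclNorm (P u - xdag)
        ≤ 2 * sSup {r : ℝ | ∃ v ∈ C, euclNorm v ≤ 1 ∧ r = dot v (u - xdag)} + ε := by
  intro u
  have hcone : ∀ a : ℝ, 0 ≤ a → ∀ v ∈ WithLp.toLp 2 '' C, a • v ∈ WithLp.toLp 2 '' C := by
    rintro a ha _ ⟨_, hv, rfl⟩
    rw [hC] at hv
    obtain ⟨b, hb, z, hz, rfl⟩ := hv
    refine ⟨(a * b) • (z - xdag), ?_, by rw [mul_smul, WithLp.toLp_smul]⟩
    rw [hC]
    exact ⟨a * b, mul_nonneg ha hb, z, hz, rfl⟩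
  have hproj : WithLp.toLp 2 (PM u - xdag) ∈ WithLp.toLp 2 '' C :=
    ⟨PM u - xdag, by rw [hC]; exact ⟨1, zero_le_one, PM u, (hPM u).1, (one_smul _ _).symm⟩, rfl⟩
  have hcloser : ‖WithLp.toLp 2 (u - xdag) - WithLp.toLp 2 (PM u - xdag)‖
      ≤ ‖WithLp.toLp 2 (u - xdag)‖ := by
    rw [← WithLp.toLp_sub, sub_sub_sub_cancel_right, ← euclNorm_eq_norm_toLp,
      ← euclNorm_eq_norm_toLp]
    exact (hPM u).2 xdag hxdag
  rw [sSup_dot_eq_supportOnUnitBall]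
  calc euclNorm (P u - xdag)
      ≤ euclNorm (P u - PM u) + ‖WithLp.toLp 2 (PM u - xdag)‖ := by
        simp only [euclNorm_eq_norm_toLp, WithLp.toLp_sub]
        exact norm_sub_le_norm_sub_add_norm_sub _ _ _
    _ ≤ ε + 2 * supportOnUnitBall (WithLp.toLp 2 '' C) (WithLp.toLp 2 (u - xdag)) :=
        add_le_add (hP u) (norm_le_two_mul_supportOnUnitBall hcone hproj hcloser)
    _ = _ := add_comm _ _

/-- If `P` is an `ε`-approximate Euclidean projection onto a nonempty closed set `M ∋ x†`
and `C` is the cone generated by `M - x†`, then for every `u`: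
`‖P(u) - x†‖ ≤ 2 sup_{v ∈ C, ‖v‖ ≤ 1} ⟨v, u - x†⟩ + ε`. -/
theorem approx_proj_error_bound {d : ℕ} (M : Set (Fin d → ℝ)) (hMne : M.Nonempty)
    (hMc : IsClosed M) (xdag : Fin d → ℝ) (hxdag : xdag ∈ M)
    (C : Set (Fin d → ℝ))
    (hC : C = {v | ∃ a : ℝ, 0 ≤ a ∧ ∃ z ∈ M, v = a • (z - xdag)})
    (PM P : (Fin d → ℝ) → (Fin d → ℝ))
    (hPM : ∀ u, PM u ∈ M ∧ ∀ z ∈ M, euclNorm (u - PM u) ≤ euclNorm (u - z))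
    (ε : ℝ) (hε : 0 ≤ ε) (hP : ∀ u, euclNorm (P u - PM u) ≤ ε) :
    ∀ u : Fin d → ℝ,
      euclNorm (P u - xdag)
        ≤ 2 * sSup {r : ℝ | ∃ v ∈ C, euclNorm v ≤ 1 ∧ r = dot v (u - xdag)} + ε :=
  approx_proj_error_bound_general M xdag hxdag C hC PM P hPM ε hP
end
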